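/- arXiv:math/0608445 — 2 statements merged into one kernel-verified Lean document; each statement's English description precedes it below -/
import Mathlib

section
/- Suppose φ, not an automorphism, is a linear-fractional self-map of 𝔻 with φ(ζ) = η for some ζ, η ∈ ∂𝔻, and let σ be the Krein adjoint of φ. Then φ′(ζ)·σ′(η) = 1, and τ = φ∘σ is a positive parabolic non-automorphism: τ is not an automorphism, its only fixed point on the Riemann sphere is η ∈ ∂𝔻, and conjugating by Φ(z) = (η+z)/(η−z) gives τ(z) = Φ⁻¹(Φ(z) + t) for some strictly positive real number t. -/
open Complex Set
open scoped ComplexConjugate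

noncomputable section

def unitDisk : Set ℂ := Metric.ball 0 1

def unitCircle : Set ℂ := Metric.sphere 0 1

lemma aux_div_div (x y M : ℂ) (hM : M ≠ 0) : (x/M)/(y/M) = x/y := by
  rcases eq_or_ne y 0 with rfl | hy
  · simp
  · field_simp

lemma aux_poly (A B C : ℝ) (h : ∀ r : ℝ, 0 ≤ r → r < 1 → 0 ≤ A*r^2 + B*r + C) : 0 ≤ A + B + C := by
  by_contra hneg
  push_neg at hneg
  set S := A + B + C with hS
  set M := 2*|A| + |B| with hMdef
  have hM : (0:ℝ) ≤ M := by positivity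
  rcases le_or_gt (M + 1) (-S) with hbig | hsmall
  · have h0 := h 0 le_rfl one_pos
    simp only [mul_zero, zero_add, pow_two] at h0
    nlinarith [le_abs_self A, le_abs_self B, neg_abs_le A, neg_abs_le B, abs_nonneg A, abs_nonneg B]
  · set r := 1 + S/(M+1) with hr
    have hMpos : (0:ℝ) < M + 1 := by linarith
    have hr0 : 0 ≤ r := by
      have : -S/(M+1) ≤ 1 := div_le_one_of_le₀ (by linarith) (by linarith)
      rw [hr, neg_div] at *
      linarith
    have hr1 : r < 1 := by
      have : S/(M+1) < 0 := div_neg_of_neg_of_pos hneg hMpos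
      rw [hr]; linarith
    have hval := h r hr0 hr1
    have h1r : 1 - r = -S/(M+1) := by rw [hr]; ring
    have key : A*r^2 + B*r + C = S - (1-r)*(A*(r+1)+B) := by rw [hS]; ring
    have hb1 : A*(r+1)+B ≤ M := by
      rw [hMdef]
      nlinarith [le_abs_self A, le_abs_self B, neg_abs_le A, abs_nonneg A]
    have hb1' : -M ≤ A*(r+1)+B := by
      rw [hMdef]
      nlinarith [le_abs_self A, neg_abs_le B, neg_abs_le A, abs_nonneg A]
    have h1rpos : 0 < 1 - r := by linarith
    have hub : (1-r)*M < -S := by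
      rw [h1r, div_mul_eq_mul_div, div_lt_iff₀ hMpos]
      nlinarith
    have hX : (1-r)*(-M) ≤ (1-r)*(A*(r+1)+B) := mul_le_mul_of_nonneg_left hb1' (le_of_lt h1rpos)
    nlinarith

set_option maxHeartbeats 2000000 in
/-- Proposition 2.  Suppose `φ`, not an automorphism, is a linear-fractional
self-map of the unit disk with `φ(ζ) = η` for points `ζ, η` on the unit circle, and let `σ` be
the Krein adjoint of `φ`.  Then `φ'(ζ) * σ'(η) = 1` and `τ = φ ∘ σ` is a positive parabolic
non-automorphism: `τ` is not an automorphism of the disk, its only fixed point on the Riemann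
sphere is `η` (in particular `η` is its only fixed point in `ℂ`, and `τ` is not an affine map,
so that `∞` is not fixed), and conjugating by `Φ(z) = (η+z)/(η-z)` turns `τ` into translation
by a strictly positive real number `t`. -/
theorem krein_adjoint_composition_positive_parabolic
    (a b c d : ℂ) (hdet : a * d - b * c ≠ 0)
    (φ σ : ℂ → ℂ)
    (hφ : ∀ z, φ z = (a * z + b) / (c * z + d))
    (hσ : ∀ z, σ z = (conj a * z - conj c) / (-(conj b) * z + conj d))
    (hself : Set.MapsTo φ unitDisk unitDisk)
    (hnotauto : ¬ Set.SurjOn φ unitDisk unitDisk)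
    (ζ η : ℂ) (hζ : ζ ∈ unitCircle) (hη : η ∈ unitCircle) (hφζ : φ ζ = η) :
    deriv φ ζ * deriv σ η = 1 ∧
    (¬ Set.SurjOn (fun z => φ (σ z)) unitDisk unitDisk) ∧
    (∀ z : ℂ, φ (σ z) = z → z = η) ∧ φ (σ η) = η ∧
    (¬ ∃ p q : ℂ, ∀ z ∈ unitDisk, φ (σ z) = p * z + q) ∧
    (∃ t : ℝ, 0 < t ∧ ∀ z ∈ unitDisk,
      (η + φ (σ z)) / (η - φ (σ z)) = (η + z) / (η - z) + (t : ℂ)) := by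
  have hζn : ‖ζ‖ = 1 := by simpa [unitCircle, mem_sphere_zero_iff_norm] using hζ
  have hηn : ‖η‖ = 1 := by simpa [unitCircle, mem_sphere_zero_iff_norm] using hη
  have hζ0 : ζ ≠ 0 := by intro h; rw [h] at hζn; simp at hζn
  have hη0 : η ≠ 0 := by intro h; rw [h] at hηn; simp at hηn
  have hζu : ζ * conj ζ = 1 := by
    rw [Complex.mul_conj]; norm_cast
    rw [Complex.normSq_eq_norm_sq, hζn]; norm_num
  have hηu : η * conj η = 1 := by
    rw [Complex.mul_conj]; norm_cast
    rw [Complex.normSq_eq_norm_sq, hηn]; norm_num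
  have hmem : ∀ z : ℂ, z ∈ unitDisk ↔ ‖z‖ < 1 := by
    intro z; simp [unitDisk, Metric.mem_ball, dist_zero_right]
  -- the denominator at ζ is nonzero
  have hd1 : c * ζ + d ≠ 0 := by
    intro h
    rw [hφ, h, div_zero] at hφζ
    exact hη0 hφζ.symm
  have hE1 : a * ζ + b = η * (c * ζ + d) := by
    rw [hφ] at hφζ
    rw [div_eq_iff hd1] at hφζ
    linear_combination hφζ
  -- no pole in the open disk
  have hpole : ∀ z : ℂ, ‖z‖ < 1 → c * z + d ≠ 0 := by
    intro z hz hzero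
    have hc : c ≠ 0 := by
      intro hc0
      rw [hc0, zero_mul, zero_add] at hzero
      rw [hc0, hzero] at hd1
      simp at hd1
    have hnum : a * z + b ≠ 0 := by
      intro h0
      apply hdet
      have hdz : d = -(c*z) := by linear_combination hzero
      have hbz : b = -(a*z) := by linear_combination h0
      rw [hdz, hbz]; ring
    set m := ‖a * z + b‖ with hm
    have hmpos : 0 < m := norm_pos_iff.mpr hnum
    set ε := min ((1 - ‖z‖)/2) (m / (‖a‖ + ‖c‖ + 1)) with hε
    have hεpos : 0 < ε := by
      apply lt_min
      · linarith
      · positivity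
    have hε1 : ε ≤ (1 - ‖z‖)/2 := min_le_left _ _
    have hε2 : ε ≤ m / (‖a‖ + ‖c‖ + 1) := min_le_right _ _
    have hεn : ‖(ε:ℂ)‖ = ε := by
      rw [Complex.norm_real, Real.norm_eq_abs, abs_of_pos hεpos]
    have hz' : ‖z + (ε:ℂ)‖ < 1 := by
      calc ‖z + (ε:ℂ)‖ ≤ ‖z‖ + ‖(ε:ℂ)‖ := norm_add_le _ _
        _ = ‖z‖ + ε := by rw [hεn]
        _ < 1 := by linarith
    have hin := hself ((hmem _).mpr hz')
    rw [hmem] at hin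
    rw [hφ] at hin
    have hden : c * (z + (ε:ℂ)) + d = c * (ε:ℂ) := by
      linear_combination hzero
    rw [hden] at hin
    have hdenn : c * (ε:ℂ) ≠ 0 := by
      apply mul_ne_zero hc
      simpa using ne_of_gt hεpos
    rw [norm_div] at hin
    have hcε : ‖c * (ε:ℂ)‖ = ‖c‖ * ε := by
      rw [norm_mul, hεn]
    have hlt : ‖a * (z + (ε:ℂ)) + b‖ < ‖c‖ * ε := by
      rw [← hcε]
      exact (div_lt_one (norm_pos_iff.mpr hdenn)).mp hin
    have hge : m - ‖a‖ * ε ≤ ‖a * (z + (ε:ℂ)) + b‖ := by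
      have heq : a * (z + (ε:ℂ)) + b = (a * z + b) + a * (ε:ℂ) := by ring
      rw [heq]
      have h1 : ‖a * (ε:ℂ)‖ = ‖a‖ * ε := by rw [norm_mul, hεn]
      have h2 : m ≤ ‖(a*z+b) + a * (ε:ℂ)‖ + ‖a * (ε:ℂ)‖ := norm_le_add_norm_add _ _
      rw [h1] at h2
      linarith
    have hfin : m < (‖a‖ + ‖c‖) * ε := by nlinarith
    have : (‖a‖ + ‖c‖) * ε ≤ (‖a‖+‖c‖) * (m / (‖a‖ + ‖c‖ + 1)) := by
      apply mul_le_mul_of_nonneg_left hε2 (by positivity)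
    have hlast : (‖a‖+‖c‖) * (m / (‖a‖ + ‖c‖ + 1)) < m := by
      rw [mul_div_assoc']
      rw [div_lt_iff₀ (by positivity)]
      nlinarith [norm_nonneg a, norm_nonneg c]
    linarith
  have hline : ∀ z : ℂ, ‖z‖ < 1 → ‖a*z+b‖ < ‖c*z+d‖ := by
    intro z hz
    have h1 := hpole z hz
    have hin := hself ((hmem _).mpr hz)
    rw [hmem, hφ, norm_div] at hin
    exact (div_lt_one (norm_pos_iff.mpr h1)).mp hin
  have hsq : ∀ u : ℂ, normSq u = ‖u‖^2 := by
    intro u; rw [Complex.normSq_eq_norm_sq]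
  have hζs : normSq ζ = 1 := by rw [hsq, hζn]; norm_num
  have hηs : normSq η = 1 := by rw [hsq, hηn]; norm_num
  have hlineSq : ∀ z : ℂ, ‖z‖ < 1 → normSq (a*z+b) < normSq (c*z+d) := by
    intro z hz
    have h1 := hline z hz
    rw [hsq, hsq]
    have h2 := norm_nonneg (a*z+b)
    nlinarith
  have hQc : ∀ z : ℂ, ‖z‖ ≤ 1 → normSq (a*z+b) ≤ normSq (c*z+d) := by
    intro z hz
    rcases lt_or_eq_of_le hz with hlt | heq
    · exact le_of_lt (hlineSq z hlt)
    · have hexp : ∀ u v : ℂ, ∀ r : ℝ, normSq (u*((r:ℂ)*z) + v)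
          = normSq (u*z)*r^2 + 2*((u*z)*conj v).re * r + normSq v := by
        intro u v r
        have h1 : u*((r:ℂ)*z) + v = (r:ℂ)*(u*z) + v := by ring
        rw [h1, Complex.normSq_add, Complex.normSq_mul, Complex.normSq_ofReal]
        have h2 : (r:ℂ)*(u*z) * conj v = (r:ℂ)*((u*z)*conj v) := by ring
        rw [h2, Complex.re_ofReal_mul]
        ring
      have hstep : ∀ r : ℝ, 0 ≤ r → r < 1 → 0 ≤ (normSq (c*z) - normSq (a*z))*r^2
          + (2*(((c*z)*conj d).re - ((a*z)*conj b).re))*r + (normSq d - normSq b) := by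
        intro r hr0 hr1
        have hzr : ‖(r:ℂ)*z‖ < 1 := by
          rw [norm_mul, Complex.norm_real, Real.norm_eq_abs, _root_.abs_of_nonneg hr0, heq]
          nlinarith
        have := hlineSq ((r:ℂ)*z) hzr
        rw [hexp a b r, hexp c d r] at this
        nlinarith
      have hA := aux_poly _ _ _ hstep
      have h1 : normSq (a*z+b) = normSq (a*((1:ℝ)*z)+b) := by norm_num
      have h2 : normSq (c*z+d) = normSq (c*((1:ℝ)*z)+d) := by norm_num
      rw [h1, h2, hexp a b 1, hexp c d 1]
      nlinarith [hA]
  have hbd : normSq b < normSq d := by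
    have := hlineSq 0 (by norm_num)
    simpa using this
  have hd0 : d ≠ 0 := by
    intro h; rw [h] at hbd; simp at hbd
    exact absurd hbd (Complex.normSq_nonneg b).not_gt
  -- the w relation
  set w : ℂ := c * conj d - a * conj b with hw_def
  set K : ℝ := normSq c + normSq d - normSq a - normSq b with hK_def
  have hcirc : ∀ z : ℂ, normSq z = 1 →
      normSq (c*z+d) - normSq (a*z+b) = K + 2*(w*z).re := by
    intro z h1
    rw [Complex.normSq_add, Complex.normSq_add, Complex.normSq_mul, Complex.normSq_mul, h1]
    have h2 : (w*z).re = ((c*z)*conj d).re - ((a*z)*conj b).re := by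
      have h3 : w*z = (c*z)*conj d - (a*z)*conj b := by rw [hw_def]; ring
      rw [h3, Complex.sub_re]
    rw [h2, hK_def]
    ring
  have hQζ : normSq (a*ζ+b) = normSq (c*ζ+d) := by
    rw [hE1, Complex.normSq_mul, hηs, one_mul]
  have hKζ : K + 2*(w*ζ).re = 0 := by
    have := hcirc ζ hζs
    rw [hQζ] at this
    linarith
  have hW : w * ζ = ((-(K/2) : ℝ) : ℂ) := by
    rcases eq_or_ne w 0 with hw0 | hw0
    · rw [hw0, zero_mul]
      rw [hw0] at hKζ
      simp at hKζ
      rw [hKζ]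
      norm_num
    · have hwn : (0:ℝ) < ‖w‖ := norm_pos_iff.mpr hw0
      set zs : ℂ := -conj w / (‖w‖ : ℂ) with hzs
      have hzsn : ‖zs‖ = 1 := by
        rw [hzs, norm_div, norm_neg, RCLike.norm_conj, Complex.norm_real, Real.norm_eq_abs,
          abs_of_pos hwn, div_self (ne_of_gt hwn)]
      have hzss : normSq zs = 1 := by rw [hsq, hzsn]; norm_num
      have hge := hQc zs (le_of_eq hzsn)
      have h4 := hcirc zs hzss
      have h5 : 0 ≤ K + 2*(w*zs).re := by linarith
      have h6 : w * zs = ((-‖w‖ : ℝ) : ℂ) := by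
        rw [hzs]
        rw [mul_div_assoc']
        rw [mul_neg, Complex.mul_conj]
        rw [hsq w]
        push_cast
        rw [neg_div]
        rw [pow_two, mul_div_assoc, div_self (by exact_mod_cast ne_of_gt hwn)]
        ring
      rw [h6] at h5
      have h7 : (((-‖w‖ : ℝ) : ℂ)).re = -‖w‖ := by simp
      rw [h7] at h5
      -- so 2‖w‖ ≤ K; also |(w ζ).re| ≤ ‖w‖ and (wζ).re = -K/2
      have h8 : ‖w*ζ‖ = ‖w‖ := by
        rw [norm_mul, hζn, mul_one]
      have h9 : |(w*ζ).re| ≤ ‖w‖ := by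
        rw [← h8]; exact Complex.abs_re_le_norm _
      have h10 : (w*ζ).re = -(K/2) := by linarith
      have h11 : -(K/2) = -‖w‖ := by
        rw [h10, abs_le] at h9
        linarith [h9.1, h9.2, h5]
      have h12 : (w*ζ).im = 0 := by
        have h13 : normSq (w*ζ) = ‖w‖^2 := by rw [hsq, ← h8]
        rw [Complex.normSq_apply, h10, h11] at h13
        nlinarith [sq_nonneg ((w*ζ).im)]
      apply Complex.ext
      · simpa using h10
      · simpa using h12
  -- conjugated relations
  have hE1c : conj a * conj ζ + conj b = conj η * (conj c * conj ζ + conj d) := by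
    have h := congrArg conj hE1
    simpa [map_add, map_mul] using h
  have hE2 : conj c + conj d * ζ = η * (conj a + conj b * ζ) := by
    linear_combination (-(ζ*η))*hE1c + (η*conj a - conj c)*hζu
      + (-(conj c*ζ*conj ζ) - conj d*ζ)*hηu
  have hE3 : ζ*(conj d - conj b*η) = conj a*η - conj c := by
    linear_combination hE2
  have hwc : conj c * d - conj a * b = -(((K:ℝ):ℂ)/2) * ζ := by
    have h := congrArg conj hW
    simp only [map_mul, map_sub, Complex.conj_conj, Complex.conj_ofReal] at h
    have h2 : (conj c * d - conj a * b) * (conj ζ * ζ) = ((-(K/2):ℝ):ℂ) * ζ := by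
      rw [← mul_assoc]
      rw [show (conj c * d - conj a * b) * conj ζ = conj w * conj ζ by rw [hw_def]; simp [map_sub, map_mul]]
      rw [h]
    rw [show conj ζ * ζ = 1 by linear_combination hζu] at h2
    rw [mul_one] at h2
    rw [h2]
    push_cast
    ring
  set AA : ℝ := normSq a - normSq b with hAA_def
  set DD : ℝ := normSq d - normSq c with hDD_def
  set s : ℝ := (AA + DD)/2 with hs_def
  have hmc : ∀ u : ℂ, ((normSq u : ℝ) : ℂ) = u * conj u := by
    intro u; rw [Complex.mul_conj]
  have hAc : ((AA:ℝ):ℂ) = a*conj a - b*conj b := by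
    rw [hAA_def]; push_cast [hmc]; ring
  have hDc : ((DD:ℝ):ℂ) = d*conj d - c*conj c := by
    rw [hDD_def]; push_cast [hmc]; ring
  have hKc : ((K:ℝ):ℂ) = c*conj c + d*conj d - a*conj a - b*conj b := by
    rw [hK_def]; push_cast [hmc]; ring
  have hsc : ((s:ℝ):ℂ) = (a*conj a - b*conj b + (d*conj d - c*conj c))/2 := by
    rw [hs_def, hAA_def, hDD_def]; push_cast [hmc]; ring
  -- the key real-ness of P
  have hP : (c*ζ+d)*(conj d - conj b*η) = ((s:ℝ):ℂ) := by
    rw [hsc]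
    apply mul_right_cancel₀ hζ0
    linear_combination (c*ζ+d)*hE3 - conj a*hE1 - hwc + (ζ/2)*hKc
  -- |P| = |det|
  have hE4 : (d*η - b)*(c*ζ+d) = (a*d - b*c)*ζ := by
    linear_combination (-d)*hE1
  have k1 : conj d - conj b*η = η*(conj d*conj η - conj b) := by
    linear_combination (-(conj d))*hηu
  have hPn : s^2 = normSq ((c*ζ+d)*(conj d - conj b*η)) := by
    rw [hP, Complex.normSq_ofReal]; ring
  have h5n : normSq (conj d - conj b*η) = normSq (d*η - b) := by
    rw [k1, Complex.normSq_mul, hηs, one_mul]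
    rw [show conj d*conj η - conj b = conj (d*η - b) by simp [map_sub, map_mul]]
    rw [Complex.normSq_conj]
  have h6n : normSq (d*η - b) * normSq (c*ζ+d) = normSq (a*d - b*c) := by
    have h := congrArg normSq hE4
    rw [Complex.normSq_mul, Complex.normSq_mul, hζs, mul_one] at h
    exact h
  have hs2 : s^2 = normSq (a*d - b*c) := by
    rw [hPn, Complex.normSq_mul, h5n]
    rw [← h6n]; ring
  have hs0 : s ≠ 0 := by
    intro h
    rw [h] at hs2
    have := Complex.normSq_pos.mpr hdet
    simp at hs2
    rw [← hs2] at this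
    exact lt_irrefl 0 this
  -- β and its value
  set B : ℂ := a*conj c - b*conj d with hB_def
  have hAeq : ((AA:ℝ):ℂ)*η - B = η*((c*ζ+d)*(conj d - conj b*η)) := by
    rw [hAc, hB_def]
    linear_combination (conj d - conj b*η)*hE1 - a*hE3
  have hβ : B = (((AA - DD)/2 : ℝ):ℂ)*η := by
    have h := hAeq
    rw [hP] at h
    have hcast : (((AA - DD)/2 : ℝ):ℂ) = ((AA:ℝ):ℂ) - ((s:ℝ):ℂ) := by
      rw [hs_def]; push_cast; ring
    rw [hcast]
    linear_combination -h
  have hβc : conj B = (((AA - DD)/2 : ℝ):ℂ)*conj η := by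
    have h := congrArg conj hβ
    simp only [map_mul, map_div₀, map_sub, Complex.conj_ofReal, map_ofNat] at h
    push_cast at h ⊢
    exact h
  -- σ maps the disk into the disk
  have hbnorm : ‖b‖ < ‖d‖ := by
    rw [hsq, hsq] at hbd
    nlinarith [norm_nonneg b, norm_nonneg d]
  have hMne : ∀ z : ℂ, ‖z‖ ≤ 1 → conj d - conj b * z ≠ 0 := by
    intro z hz h0
    have h1 : conj d = conj b * z := by linear_combination h0
    have h2 : ‖conj d‖ = ‖conj b * z‖ := by rw [h1]
    rw [norm_mul, RCLike.norm_conj, RCLike.norm_conj] at h2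
    nlinarith [norm_nonneg b, norm_nonneg z, hbnorm]
  have hσval : ∀ z : ℂ, σ z = (conj a * z - conj c) / (conj d - conj b * z) := by
    intro z
    rw [hσ]
    congr 1
    ring
  have hσmap : ∀ z : ℂ, ‖z‖ < 1 → ‖σ z‖ < 1 := by
    intro z hz
    rcases eq_or_ne (conj a * z - conj c) 0 with hN | hN
    · rw [hσval, hN, zero_div]
      norm_num
    · have hM := hMne z (le_of_lt hz)
      have hNc : a * conj z - c ≠ 0 := by
        intro h0
        apply hN
        have := congrArg conj h0
        simpa [map_sub, map_mul] using this
      have hMc : d - b * conj z ≠ 0 := by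
        intro h0
        apply hM
        have := congrArg conj h0
        simpa [map_sub, map_mul] using this
      set u : ℂ := (d - b * conj z) / (a * conj z - c) with hu_def
      have hu1 : 1 < ‖u‖ := by
        by_contra hle
        push_neg at hle
        have hQu := hQc u hle
        have hcu : c * u + d = (a*d - b*c) * conj z / (a * conj z - c) := by
          rw [hu_def, mul_div_assoc', div_add' _ _ _ hNc, div_left_inj' hNc]
          ring
        have hau : a * u + b = (a*d - b*c) / (a * conj z - c) := by
          rw [hu_def, mul_div_assoc', div_add' _ _ _ hNc, div_left_inj' hNc]
          ring
        rw [hcu, hau] at hQu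
        rw [Complex.normSq_div, Complex.normSq_div, Complex.normSq_mul] at hQu
        have hden : 0 < normSq (a * conj z - c) := Complex.normSq_pos.mpr hNc
        have hdd : 0 < normSq (a*d - b*c) := Complex.normSq_pos.mpr hdet
        have hzn : normSq (conj z) < 1 := by
          rw [Complex.normSq_conj, hsq]
          nlinarith [norm_nonneg z]
        rw [div_le_div_iff₀ hden hden] at hQu
        nlinarith [mul_pos (mul_pos hdd hden) (sub_pos.mpr hzn)]
      have hσc : conj (σ z) = u⁻¹ := by
        have h1 : conj (σ z) = (a*conj z - c)/(d - b*conj z) := by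
          rw [hσval, map_div₀]
          congr 1
          · simp [map_sub, map_mul]
          · simp [map_sub, map_mul]
        rw [h1, hu_def, inv_div]
      have : ‖σ z‖ = ‖u‖⁻¹ := by
        rw [← RCLike.norm_conj (σ z), hσc, norm_inv]
      rw [this]
      rw [inv_lt_one_iff₀]
      right; exact hu1
  -- DD > 0 and the τ-formula
  have hσ0 : σ 0 ∈ unitDisk := (hmem _).mpr (hσmap 0 (by norm_num))
  have hDD : 0 < DD := by
    have h1 : σ 0 = - conj c / conj d := by
      rw [hσval]; norm_num
    have h2 := hσmap 0 (by norm_num)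
    rw [h1, norm_div, norm_neg, RCLike.norm_conj, RCLike.norm_conj] at h2
    have hdn : 0 < ‖d‖ := norm_pos_iff.mpr hd0
    rw [div_lt_one hdn] at h2
    rw [hDD_def, hsq, hsq]
    nlinarith [norm_nonneg c]
  have hτform : ∀ z : ℂ, conj d - conj b * z ≠ 0 →
      φ (σ z) = (((AA:ℝ):ℂ)*z - B)/(conj B*z + ((DD:ℝ):ℂ)) := by
    intro z hM
    rw [hφ, hσval]
    have e1 : a * ((conj a*z - conj c)/(conj d - conj b*z)) + b
        = (((AA:ℝ):ℂ)*z - B)/(conj d - conj b*z) := by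
      rw [hAc, hB_def, mul_div_assoc', div_add' _ _ _ hM, div_left_inj' hM]
      ring
    have hBc : conj B = conj a * c - conj b * d := by
      rw [hB_def]; simp [map_sub, map_mul]
    have e2 : c * ((conj a*z - conj c)/(conj d - conj b*z)) + d
        = (conj B*z + ((DD:ℝ):ℂ))/(conj d - conj b*z) := by
      rw [hDc, hBc, mul_div_assoc', div_add' _ _ _ hM, div_left_inj' hM]
      ring
    rw [e1, e2, aux_div_div _ _ _ hM]
  have hBnorm : ‖B‖ < DD := by
    have h2 : φ (σ 0) ∈ unitDisk := hself hσ0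
    rw [hτform 0 (by simpa using hMne 0 (by norm_num))] at h2
    rw [hmem] at h2
    simp only [mul_zero, zero_sub, zero_add] at h2
    rw [norm_div, norm_neg, Complex.norm_real, Real.norm_eq_abs, abs_of_pos hDD] at h2
    rw [div_lt_one hDD] at h2
    exact h2
  have hBDne : ∀ z : ℂ, ‖z‖ ≤ 1 → conj B*z + ((DD:ℝ):ℂ) ≠ 0 := by
    intro z hz h0
    have h1 : ((DD:ℝ):ℂ) = -(conj B * z) := by linear_combination h0
    have h2 : ‖((DD:ℝ):ℂ)‖ = ‖conj B * z‖ := by rw [h1, norm_neg]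
    rw [Complex.norm_real, Real.norm_eq_abs, abs_of_pos hDD, norm_mul, RCLike.norm_conj] at h2
    nlinarith [norm_nonneg B, norm_nonneg z]
  have hsC : ((s:ℝ):ℂ) ≠ 0 := Complex.ofReal_ne_zero.mpr hs0
  have hden2 : ∀ z : ℂ, η*(conj B*z + ((DD:ℝ):ℂ)) - (((AA:ℝ):ℂ)*z - B) = ((s:ℝ):ℂ)*(η - z) := by
    intro z
    rw [hβc, hβ]
    push_cast [hs_def]
    linear_combination ((((AA:ℝ):ℂ) - ((DD:ℝ):ℂ))/2*z)*hηu
  have hADne : AA ≠ DD := by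
    intro hADeq
    have hB0 : B = 0 := by rw [hβ, hADeq]; simp
    apply hnotauto
    intro y hy
    refine ⟨σ y, (hmem _).mpr (hσmap y ((hmem _).mp hy)), ?_⟩
    have hM := hMne y (le_of_lt ((hmem _).mp hy))
    rw [hτform y hM, hB0]
    simp only [map_zero, zero_mul, sub_zero, zero_add]
    rw [hADeq, mul_comm, mul_div_assoc, div_self (Complex.ofReal_ne_zero.mpr (ne_of_gt hDD)), mul_one]
  have hg : (((AA - DD)/2 : ℝ):ℂ) ≠ 0 := by
    rw [Complex.ofReal_ne_zero]
    intro h; apply hADne; linarith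
  set t : ℝ := (DD - AA)/s with ht_def
  have htne : t ≠ 0 := by
    rw [ht_def]
    exact div_ne_zero (sub_ne_zero.mpr (fun h => hADne h.symm)) hs0
  have hmain : ∀ z : ℂ, ‖z‖ < 1 →
      (η + φ (σ z)) / (η - φ (σ z)) = (η + z)/(η - z) + ((t:ℝ):ℂ) := by
    intro z hz
    have hM := hMne z (le_of_lt hz)
    have hy := hBDne z (le_of_lt hz)
    have hηz : η - z ≠ 0 := by
      intro h0
      have h1 : η = z := by linear_combination h0
      rw [← h1, hηn] at hz
      exact lt_irrefl 1 hz
    rw [hτform z hM]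
    have h1 : η + (((AA:ℝ):ℂ)*z - B)/(conj B*z + ((DD:ℝ):ℂ))
        = (η*(conj B*z + ((DD:ℝ):ℂ)) + (((AA:ℝ):ℂ)*z - B))/(conj B*z + ((DD:ℝ):ℂ)) := by
      rw [add_div' _ _ _ hy]
    have h2 : η - (((AA:ℝ):ℂ)*z - B)/(conj B*z + ((DD:ℝ):ℂ))
        = (((s:ℝ):ℂ)*(η - z))/(conj B*z + ((DD:ℝ):ℂ)) := by
      rw [← hden2 z, sub_div' hy]
    rw [h1, h2, aux_div_div _ _ _ hy]
    have hts : ((t:ℝ):ℂ) * ((s:ℝ):ℂ) = ((DD:ℝ):ℂ) - ((AA:ℝ):ℂ) := by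
      rw [← Complex.ofReal_mul, ← Complex.ofReal_sub]
      congr 1
      rw [ht_def]
      field_simp
    have hnum : η*(conj B*z + ((DD:ℝ):ℂ)) + (((AA:ℝ):ℂ)*z - B)
        = (η+z)*((s:ℝ):ℂ) + ((t:ℝ):ℂ)*((s:ℝ):ℂ)*(η - z) := by
      rw [hts, hβc, hβ]
      push_cast [hs_def]
      linear_combination ((((AA:ℝ):ℂ) - ((DD:ℝ):ℂ))/2*z)*hηu
    rw [hnum]
    have hsz : ((s:ℝ):ℂ)*(η - z) ≠ 0 := mul_ne_zero hsC hηz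
    field_simp
  have hRepos : ∀ v : ℂ, ‖v‖ < 1 → 0 < ((η + v)/(η - v)).re := by
    intro v hv
    have hnv : η - v ≠ 0 := by
      intro h0
      have h1 : η = v := by linear_combination h0
      rw [← h1, hηn] at hv
      exact lt_irrefl 1 hv
    have hcnv : conj (η - v) ≠ 0 := fun h => hnv (by simpa using congrArg conj h)
    have h1 : (η+v)/(η-v) = (η+v)*conj (η-v) / (((normSq (η-v) : ℝ)):ℂ) := by
      rw [← Complex.mul_conj]
      rw [mul_div_mul_right _ _ hcnv]
    rw [h1]
    have hXre : ((η+v)*conj (η-v)).re = 1 - normSq v := by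
      have hη1 : η.re*η.re + η.im*η.im = 1 := by
        have h2 := hηs
        rwa [Complex.normSq_apply] at h2
      simp only [Complex.mul_re, Complex.add_re, Complex.add_im, Complex.conj_re,
        Complex.conj_im, Complex.sub_re, Complex.sub_im, Complex.normSq_apply]
      nlinarith
    have hdiv : ((η+v)*conj (η-v) / (((normSq (η-v) : ℝ)):ℂ)).re
        = ((η+v)*conj (η-v)).re / normSq (η-v) := by
      rw [Complex.div_ofReal_re]
    rw [hdiv, hXre]
    have hv1 : normSq v < 1 := by
      rw [hsq]
      nlinarith [norm_nonneg v]
    have hpos : 0 < normSq (η - v) := Complex.normSq_pos.mpr hnv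
    exact div_pos (by linarith) hpos
  have hmain' : ∀ r : ℝ, 0 ≤ r → r < 1 → 0 < (1 - r)/(1 + r) + t := by
    intro r hr0 hr1
    have hzr : ‖(-(r:ℂ))*η‖ < 1 := by
      rw [norm_mul, norm_neg, Complex.norm_real, Real.norm_eq_abs,
        _root_.abs_of_nonneg hr0, hηn, mul_one]
      exact hr1
    have hid := hmain ((-(r:ℂ))*η) hzr
    have hφσ : ‖φ (σ ((-(r:ℂ))*η))‖ < 1 := (hmem _).mp (hself ((hmem _).mpr (hσmap _ hzr)))
    have hre := hRepos _ hφσ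
    rw [hid] at hre
    have hr1' : (1:ℂ) + (r:ℂ) ≠ 0 := by
      intro h0
      have : (1 + r : ℝ) = 0 := by exact_mod_cast h0
      linarith
    have hfrac : (η + (-(r:ℂ))*η)/(η - (-(r:ℂ))*η) = (((1-r)/(1+r) : ℝ):ℂ) := by
      have h1 : η + (-(r:ℂ))*η = η*(1 - (r:ℂ)) := by ring
      have h2 : η - (-(r:ℂ))*η = η*(1 + (r:ℂ)) := by ring
      rw [h1, h2, mul_div_mul_left _ _ hη0]
      push_cast
      ring
    rw [hfrac, ← Complex.ofReal_add] at hre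
    exact_mod_cast hre
  have htpos : 0 < t := by
    rcases lt_trichotomy t 0 with hneg | h0 | hpos
    · exfalso
      set r := max 0 (1 + t/2) with hr
      have hr0 : (0:ℝ) ≤ r := le_max_left _ _
      have hr1 : r < 1 := max_lt one_pos (by linarith)
      have h := hmain' r hr0 hr1
      have hge : 1 + t/2 ≤ r := le_max_right _ _
      have h2 : (1 - r)/(1 + r) ≤ 1 - r := div_le_self (by linarith) (by linarith)
      linarith
    · exact absurd h0 htne
    · exact hpos
  -- σ η = ζ
  have hMη : conj d - conj b*η ≠ 0 := hMne η (le_of_eq hηn)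
  have hση : σ η = ζ := by
    rw [hσval, div_eq_iff hMη]
    linear_combination -hE3
  -- part 1 : derivatives
  have hpart1 : deriv φ ζ * deriv σ η = 1 := by
    have hφfun : φ = fun z => (a*z+b)/(c*z+d) := funext hφ
    have hσfun : σ = fun z => (conj a*z - conj c)/(-(conj b)*z + conj d) := funext hσ
    have hMη' : -(conj b)*η + conj d ≠ 0 := by
      rw [show -(conj b)*η + conj d = conj d - conj b*η by ring]
      exact hMη
    have hdφ : HasDerivAt φ ((a*d - b*c)/(c*ζ+d)^2) ζ := by
      rw [hφfun]
      have h1 : HasDerivAt (fun z : ℂ => a*z+b) a ζ := by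
        simpa using ((hasDerivAt_id ζ).const_mul a).add_const b
      have h2 : HasDerivAt (fun z : ℂ => c*z+d) c ζ := by
        simpa using ((hasDerivAt_id ζ).const_mul c).add_const d
      have h3 := h1.div h2 hd1
      convert h3 using 1
      show (a*d - b*c)/(c*ζ+d)^2 = (a*(c*ζ+d) - (a*ζ+b)*c)/(c*ζ+d)^2
      ring
      all_goals rfl
    have hdσ : HasDerivAt σ ((conj a*conj d - conj c*conj b)/(-(conj b)*η + conj d)^2) η := by
      rw [hσfun]
      have h1 : HasDerivAt (fun z : ℂ => conj a*z - conj c) (conj a) η := by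
        simpa using ((hasDerivAt_id η).const_mul (conj a)).sub_const (conj c)
      have h2 : HasDerivAt (fun z : ℂ => -(conj b)*z + conj d) (-(conj b)) η := by
        simpa using ((hasDerivAt_id η).const_mul (-(conj b))).add_const (conj d)
      have h3 := h1.div h2 hMη'
      convert h3 using 1
      show (conj a*conj d - conj c*conj b)/(-(conj b)*η + conj d)^2
        = (conj a*(-(conj b)*η + conj d) - (conj a*η - conj c)*(-(conj b)))/(-(conj b)*η + conj d)^2
      ring
      all_goals rfl
    rw [hdφ.deriv, hdσ.deriv]
    have hPP : ((c*ζ+d)*(conj d - conj b*η))^2 = (a*d-b*c)*(conj a*conj d - conj c*conj b) := by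
      rw [hP, ← Complex.ofReal_pow, hs2, hmc (a*d - b*c)]
      simp only [map_sub, map_mul]
      ring
    rw [div_mul_div_comm, div_eq_one_iff_eq]
    · rw [← hPP]; ring
    · apply mul_ne_zero (pow_ne_zero _ hd1) (pow_ne_zero _ hMη')
  -- part 2 : not surjective
  have hpart2 : ¬ Set.SurjOn (fun z => φ (σ z)) unitDisk unitDisk := by
    intro hS
    apply hnotauto
    intro y hy
    obtain ⟨x, hx, hxy⟩ := hS hy
    exact ⟨σ x, (hmem _).mpr (hσmap x ((hmem _).mp hx)), hxy⟩
  -- part 3 : unique fixed point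
  have hpart3 : ∀ z : ℂ, φ (σ z) = z → z = η := by
    intro z hfix
    rcases eq_or_ne (conj d - conj b*z) 0 with hM0 | hM0
    · exfalso
      have hb0 : b ≠ 0 := by
        intro h
        rw [h] at hM0
        simp at hM0
        exact hd0 (by simpa using congrArg conj hM0)
      have hσz : σ z = 0 := by
        rw [hσval, show conj d - conj b*z = 0 from hM0, div_zero]
      rw [hσz, hφ] at hfix
      simp only [mul_zero, zero_add] at hfix
      have hbz : b = z * d := by
        rw [div_eq_iff hd0] at hfix
        rw [hfix]
      have hz1 : conj d = conj b * z := by linear_combination hM0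
      have hn1 : ‖d‖ = ‖b‖ * ‖z‖ := by
        have := congrArg norm hz1
        rwa [RCLike.norm_conj, norm_mul, RCLike.norm_conj] at this
      have hn2 : ‖b‖ = ‖z‖ * ‖d‖ := by
        have := congrArg norm hbz
        rwa [norm_mul] at this
      nlinarith [norm_nonneg z, norm_nonneg b, norm_nonneg d, hbnorm]
    · rw [hτform z hM0] at hfix
      rcases eq_or_ne (conj B*z + ((DD:ℝ):ℂ)) 0 with hy0 | hy0
      · exfalso
        rw [hy0, div_zero] at hfix
        rw [← hfix] at hy0
        simp only [mul_zero, zero_add] at hy0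
        exact (ne_of_gt hDD) (Complex.ofReal_eq_zero.mp hy0)
      · rw [div_eq_iff hy0] at hfix
        have heq : conj B * z^2 + ((DD:ℝ):ℂ)*z - ((AA:ℝ):ℂ)*z + B = 0 := by
          linear_combination -hfix
        rw [hβc, hβ] at heq
        push_cast at heq
        have h3 : ((((AA:ℝ):ℂ) - ((DD:ℝ):ℂ))/2) * ((z - η)^2) = 0 := by
          linear_combination η*heq + (-(((((AA:ℝ):ℂ) - ((DD:ℝ):ℂ))/2))*z^2)*hηu
        have hgg : (((AA:ℝ):ℂ) - ((DD:ℝ):ℂ))/2 ≠ 0 := by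
          rw [div_ne_zero_iff]
          constructor
          · rw [← Complex.ofReal_sub, Complex.ofReal_ne_zero]
            intro h; apply hADne; linarith
          · norm_num
        have h4 : (z - η)^2 = 0 := by
          rcases mul_eq_zero.mp h3 with h | h
          · exact absurd h hgg
          · exact h
        have h5 : z - η = 0 := by
          exact pow_eq_zero_iff (by norm_num) |>.mp h4
        linear_combination h5
  -- part 4
  have hpart4 : φ (σ η) = η := by rw [hση]; exact hφζ
  -- part 5 : not affine
  have hpart5 : ¬ ∃ p q : ℂ, ∀ z ∈ unitDisk, φ (σ z) = p * z + q := by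
    rintro ⟨p, q, hpq⟩
    have hhalf : ‖(1/2 : ℂ)‖ < 1 := by norm_num
    have hhalf' : ‖(-(1/2) : ℂ)‖ < 1 := by
      rw [norm_neg]; norm_num
    have h0 := hpq 0 ((hmem 0).mpr (by norm_num))
    have h1 := hpq (1/2) ((hmem _).mpr hhalf)
    have h2 := hpq (-(1/2)) ((hmem _).mpr hhalf')
    rw [hτform 0 (hMne 0 (by norm_num))] at h0
    rw [hτform (1/2) (hMne _ (le_of_lt hhalf))] at h1
    rw [hτform (-(1/2)) (hMne _ (le_of_lt hhalf'))] at h2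
    rw [div_eq_iff (hBDne 0 (by norm_num))] at h0
    rw [div_eq_iff (hBDne _ (le_of_lt hhalf))] at h1
    rw [div_eq_iff (hBDne _ (le_of_lt hhalf'))] at h2
    have hpB : p * conj B = 0 := by linear_combination (-2)*h1 + (-2)*h2 + 4*h0
    have hc1 : ((AA:ℝ):ℂ) - p*((DD:ℝ):ℂ) - q*conj B = 0 := by
      linear_combination h1 - h2
    have hc0 : B + q*((DD:ℝ):ℂ) = 0 := by linear_combination -h0
    have hB0 : B ≠ 0 := by
      rw [hβ]
      exact mul_ne_zero hg hη0
    have hcB0 : conj B ≠ 0 := fun h => hB0 (by simpa using congrArg conj h)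
    have hp0 : p = 0 := by
      rcases mul_eq_zero.mp hpB with h | h
      · exact h
      · exact absurd h hcB0
    have hAD0 : ((AA:ℝ):ℂ)*((DD:ℝ):ℂ) + B*conj B = 0 := by
      linear_combination ((DD:ℝ):ℂ)*hc1 + conj B*hc0 + (((DD:ℝ):ℂ))^2*hp0
    have hdetid : ((AA:ℝ):ℂ)*((DD:ℝ):ℂ) + B*conj B = (a*d-b*c)*conj (a*d-b*c) := by
      rw [hAc, hDc, hB_def]
      simp only [map_sub, map_mul, Complex.conj_conj]
      ring
    have hzero : (a*d-b*c)*conj (a*d-b*c) = 0 := by rw [← hdetid, hAD0]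
    rcases mul_eq_zero.mp hzero with h | h
    · exact hdet h
    · exact hdet (by simpa using congrArg conj h)
  exact ⟨hpart1, hpart2, hpart3, hpart4, hpart5, t, htpos, fun z hz => hmain z ((hmem _).mp hz)⟩
end
end

section
/- Suppose φ(z) = (az+b)/(cz+d) is a linear-fractional self-map of 𝔻, not an automorphism, with φ(ζ) = η for some ζ, η ∈ ∂𝔻, and let σ be the Krein adjoint of φ. Then the scalar s = (c̄·ζ̄ + d̄)/(−b̄·η + d̄) satisfies s = |σ′(η)| = |φ′(ζ)|⁻¹; in particular s is a strictly positive real number. -/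
open Complex Set
open scoped ComplexConjugate

noncomputable section

private lemma lfm_quad_id (a b c d z : ℂ) :
    normSq (c*z+d) - normSq (a*z+b) =
      (normSq c - normSq a) * normSq z + 2*((c*conj d - a*conj b)*z).re + (normSq d - normSq b) := by
  simp [Complex.normSq_apply, Complex.mul_re, Complex.mul_im, Complex.add_re, Complex.add_im,
    Complex.conj_re, Complex.conj_im, Complex.sub_re, Complex.sub_im]
  ring

private lemma lfm_normSq_id (a b c d : ℂ) :
    normSq (c*conj d - a*conj b) = normSq (a*d-b*c) + (normSq d - normSq b)*(normSq c - normSq a) := by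
  simp [Complex.normSq_apply, Complex.mul_re, Complex.mul_im, Complex.sub_re, Complex.sub_im,
    Complex.conj_re, Complex.conj_im]
  ring

private lemma lfm_closure_nonneg (f : ℂ → ℝ) (hf : Continuous f) (z₀ : ℂ)
    (h : ∀ z ∈ Metric.ball (0:ℂ) 1 \ {z₀}, 0 ≤ f z) :
    ∀ z, ‖z‖ ≤ 1 → 0 ≤ f z := by
  intro z hz
  have hT : IsClosed {w : ℂ | 0 ≤ f w} := isClosed_le continuous_const hf
  have hsub : Metric.ball (0:ℂ) 1 ⊆ closure (Metric.ball (0:ℂ) 1 \ {z₀}) := by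
    have hd : Dense ({z₀}ᶜ : Set ℂ) := dense_compl_singleton z₀
    have h2 : Metric.ball (0:ℂ) 1 ∩ closure ({z₀}ᶜ) ⊆ closure (Metric.ball (0:ℂ) 1 ∩ {z₀}ᶜ) :=
      (Metric.isOpen_ball (x := (0:ℂ)) (ε := 1)).inter_closure
    rw [hd.closure_eq, Set.inter_univ] at h2
    exact h2
  have hz' : z ∈ closure (Metric.ball (0:ℂ) 1) := by
    rwa [closure_ball (0:ℂ) one_ne_zero, Metric.mem_closedBall, dist_zero_right]
  have hz'' : z ∈ closure (Metric.ball (0:ℂ) 1 \ {z₀}) := by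
    have := closure_mono hsub
    rw [closure_closure] at this
    exact this hz'
  exact hT.closure_subset_iff.mpr (fun w hw => h w hw) hz''

set_option maxHeartbeats 1000000 in
/-- Proposition 4.  Suppose `φ(z) = (az+b)/(cz+d)` is a linear-fractional
self-map of the unit disk, not an automorphism, with `φ(ζ) = η` for points `ζ, η` on the unit
circle, and let `σ` be the Krein adjoint of `φ`.  Then the scalar
`s = (conj c * conj ζ + conj d)/(-conj b * η + conj d)` satisfies
`s = |σ'(η)| = |φ'(ζ)|⁻¹`; in particular `s` is a strictly positive real number. -/
theorem scalar_eq_abs_deriv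
    (a b c d : ℂ) (hdet : a * d - b * c ≠ 0)
    (φ σ : ℂ → ℂ)
    (hφ : ∀ z, φ z = (a * z + b) / (c * z + d))
    (hσ : ∀ z, σ z = (conj a * z - conj c) / (-(conj b) * z + conj d))
    (hself : Set.MapsTo φ unitDisk unitDisk)
    (hnotauto : ¬ Set.SurjOn φ unitDisk unitDisk)
    (ζ η : ℂ) (hζ : ζ ∈ unitCircle) (hη : η ∈ unitCircle) (hφζ : φ ζ = η) :
    ∃ r : ℝ, 0 < r ∧
      (conj c * conj ζ + conj d) / (-(conj b) * η + conj d) = (r : ℂ) ∧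
      r = ‖deriv σ η‖ ∧ r = (‖deriv φ ζ‖)⁻¹ := by
  have hζ1 : ‖ζ‖ = 1 := by
    simpa using (mem_sphere_zero_iff_norm.mp hζ)
  have hη1 : ‖η‖ = 1 := by
    simpa using (mem_sphere_zero_iff_norm.mp hη)
  have hη0 : η ≠ 0 := by
    intro h; rw [h] at hη1; simp at hη1
  have hK : c*ζ+d ≠ 0 := by
    intro h
    rw [hφ ζ, h, div_zero] at hφζ
    exact hη0 hφζ.symm
  have hKη : η * (c*ζ+d) = a*ζ+b := by
    have h := hφ ζ
    rw [hφζ] at h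
    rw [eq_div_iff hK] at h
    linear_combination h
  -- nonnegativity of |cz+d|² - |az+b|² on the closed disk
  set z₀ : ℂ := if c = 0 then 2 else -d/c with hz₀def
  have hden : ∀ z : ℂ, z ≠ z₀ → c*z+d ≠ 0 := by
    intro z hz h
    by_cases hc : c = 0
    · rw [hc] at h
      simp at h
      rw [hc, h] at hdet
      simp at hdet
    · apply hz
      rw [hz₀def, if_neg hc]
      field_simp
      linear_combination h
  have hu : ∀ z : ℂ, ‖z‖ ≤ 1 → normSq (a*z+b) ≤ normSq (c*z+d) := by
    have hcont : Continuous (fun z : ℂ => normSq (c*z+d) - normSq (a*z+b)) := by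
      apply Continuous.sub <;> exact Complex.continuous_normSq.comp (by continuity)
    have key := lfm_closure_nonneg (fun z => normSq (c*z+d) - normSq (a*z+b)) hcont z₀ ?_
    · intro z hz
      have h := key z hz
      linarith
    · rintro z ⟨hz1, hz2⟩
      have hd0 : c*z+d ≠ 0 := hden z hz2
      have hφz : ‖φ z‖ < 1 := by
        have := hself hz1
        simpa [unitDisk] using mem_ball_zero_iff.mp this
      rw [hφ z, norm_div] at hφz
      have hpos : 0 < ‖c*z+d‖ := norm_pos_iff.mpr hd0
      have hlt : ‖a*z+b‖ < ‖c*z+d‖ := by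
        rwa [div_lt_one hpos] at hφz
      have hle : normSq (a*z+b) ≤ normSq (c*z+d) := by
        rw [← Complex.sq_norm, ← Complex.sq_norm]
        nlinarith [norm_nonneg (a*z+b)]
      linarith
  set β : ℂ := c*conj d - a*conj b with hβdef
  set p : ℝ := normSq d - normSq b with hpdef
  set q : ℝ := normSq c - normSq a with hqdef
  set B : ℝ := ‖β‖ with hBdef
  have hB2 : B^2 = normSq β := by rw [hBdef]; exact Complex.sq_norm β
  have hquad : ∀ z : ℂ, ‖z‖ ≤ 1 → 0 ≤ q * normSq z + 2*((β*z)).re + p := by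
    intro z hz
    have h1 := hu z hz
    have h2 := lfm_quad_id a b c d z
    rw [← hβdef, ← hpdef, ← hqdef] at h2
    linarith
  have hp : 0 ≤ p := by
    have h := hu 0 (by simp)
    simp at h
    rw [hpdef]; linarith
  have hB0 : 0 ≤ B := by rw [hBdef]; exact norm_nonneg _
  have hnormSqζ : normSq ζ = 1 := by rw [← Complex.sq_norm, hζ1]; norm_num
  have huζ : q + 2*((β*ζ)).re + p = 0 := by
    have h1 : ‖a*ζ+b‖ = ‖c*ζ+d‖ := by
      rw [← hKη, norm_mul, hη1, one_mul]
    have h2 : normSq (a*ζ+b) = normSq (c*ζ+d) := by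
      rw [← Complex.sq_norm, ← Complex.sq_norm, h1]
    have h3 := lfm_quad_id a b c d ζ
    rw [← hβdef, ← hpdef, ← hqdef, hnormSqζ] at h3
    linarith
  have hmcβ : β * conj β = ((B:ℂ))^2 := by
    rw [Complex.mul_conj]
    rw [← hB2]
    push_cast
    ring
  have hpqB : 2*B ≤ p + q := by
    by_cases hβ : β = 0
    · have hBz : B = 0 := by rw [hBdef, hβ]; simp
      have h := hquad 1 (by simp)
      rw [hβ] at h
      simp at h
      rw [hBz]; linarith
    · have hBpos : 0 < B := by rw [hBdef]; exact norm_pos_iff.mpr hβ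
      have hre1 : (β * (-conj β / (B:ℂ))).re = -B := by
        have hc : β * (-conj β / (B:ℂ)) = ((-B : ℝ) : ℂ) := by
          rw [← mul_div_assoc, div_eq_iff (by exact_mod_cast hBpos.ne' : (B:ℂ) ≠ 0)]
          push_cast
          linear_combination -hmcβ
        rw [hc]; simp
      have habs1 : ‖-conj β / (B:ℂ)‖ = 1 := by
        rw [norm_div, norm_neg, Complex.norm_conj, Complex.norm_real, Real.norm_eq_abs, abs_of_pos hBpos,
          ← hBdef]
        field_simp
      have h := hquad (-conj β / (B:ℂ)) (le_of_eq habs1)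
      rw [← Complex.sq_norm, habs1, hre1] at h
      norm_num at h
      linarith
  have hreζ : (β*ζ).re = -B ∧ p + q = 2*B := by
    have habsβζ : ‖β*ζ‖ = B := by rw [norm_mul, hζ1, mul_one, hBdef]
    have h1 : -B ≤ (β*ζ).re := by
      have h2 := Complex.abs_re_le_norm (β*ζ)
      rw [habsβζ] at h2
      have := abs_le.mp h2
      linarith [this.1]
    constructor <;> linarith [huζ, hpqB, h1]
  obtain ⟨hre, hpq2⟩ := hreζ
  have hβζ : β * ζ = ((-B : ℝ) : ℂ) := by
    have habsβζ : ‖β*ζ‖ = B := by rw [norm_mul, hζ1, mul_one, hBdef]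
    have hnsq : normSq (β*ζ) = B^2 := by rw [← Complex.sq_norm, habsβζ]
    have him : (β*ζ).im = 0 := by
      have h := Complex.normSq_apply (β*ζ)
      rw [hnsq, hre] at h
      nlinarith [h]
    apply Complex.ext
    · simp [hre]
    · simp [him]
  have hid : B^2 = normSq (a*d-b*c) + p * q := by
    have h := lfm_normSq_id a b c d
    rw [← hβdef, ← hpdef, ← hqdef] at h
    linarith [hB2]
  set A : ℝ := ‖a*d-b*c‖ with hAdef
  have hΔ0 : 0 < A := by rw [hAdef]; exact norm_pos_iff.mpr hdet
  have hnsqΔ : 0 < normSq (a*d-b*c) := Complex.normSq_pos.mpr hdet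
  have hA2 : A^2 = normSq (a*d-b*c) := by rw [hAdef]; exact Complex.sq_norm _
  have hqp : q ≤ p := by
    by_contra hlt
    push_neg at hlt
    have hq0 : 0 < q := lt_of_le_of_lt hp hlt
    have hBpos : 0 < B := by linarith
    set t : ℝ := B / q with htdef
    have ht0 : 0 < t := div_pos hBpos hq0
    have ht1 : t < 1 := by rw [htdef, div_lt_one hq0]; linarith
    have hre1 : (β * (-(t:ℂ) * conj β / (B:ℂ))).re = -(t*B) := by
      have hc : β * (-(t:ℂ) * conj β / (B:ℂ)) = ((-(t*B) : ℝ) : ℂ) := by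
        rw [← mul_div_assoc, div_eq_iff (by exact_mod_cast hBpos.ne' : (B:ℂ) ≠ 0)]
        push_cast
        linear_combination (-(t:ℂ)) * hmcβ
      rw [hc]; simp
    have habs1 : ‖-(t:ℂ) * conj β / (B:ℂ)‖ = t := by
      rw [norm_div, norm_mul, norm_neg, Complex.norm_conj, Complex.norm_real, Real.norm_eq_abs,
        Complex.norm_real, Real.norm_eq_abs, abs_of_pos hBpos, abs_of_pos ht0, ← hBdef]
      field_simp
    have h := hquad (-(t:ℂ) * conj β / (B:ℂ)) (le_of_lt (by rw [habs1]; exact ht1))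
    rw [← Complex.sq_norm, habs1, hre1] at h
    have hkey : B^2 ≤ p * q := by
      have ht : t * q = B := by rw [htdef]; field_simp
      nlinarith [h, hq0]
    linarith [hid, hnsqΔ, hkey]
  have hpmq : p - B = A := by
    have hsq : (p - q)^2 = (2*A)^2 := by nlinarith [hid, hpq2, hA2]
    have h1 : (p - q - 2*A) * (p - q + 2*A) = 0 := by nlinarith [hsq]
    rcases mul_eq_zero.mp h1 with h | h
    · linarith [hpq2]
    · nlinarith [hΔ0, hqp]
  -- the key product identity
  have hKD : (c*ζ+d) * (-(conj b)*η + conj d) = ((A : ℝ) : ℂ) := by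
    have hmd : d * conj d = ((normSq d : ℝ) : ℂ) := Complex.mul_conj d
    have hmb : b * conj b = ((normSq b : ℝ) : ℂ) := Complex.mul_conj b
    have step : (c*ζ+d) * (-(conj b)*η + conj d)
        = β*ζ + (((normSq d : ℝ):ℂ) - ((normSq b:ℝ):ℂ)) := by
      rw [hβdef]
      linear_combination (-(conj b)) * hKη + hmd - hmb
    rw [step, hβζ]
    have hps : ((-B:ℝ):ℂ) + (((normSq d : ℝ):ℂ) - ((normSq b:ℝ):ℂ)) = (((p - B):ℝ):ℂ) := by
      rw [hpdef]; push_cast; ring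
    rw [hps, hpmq]
  have hD : -(conj b)*η + conj d ≠ 0 := by
    intro h
    rw [h, mul_zero] at hKD
    have h2 : (0:ℝ) = A := by exact_mod_cast hKD
    linarith
  have hnsqK : 0 < normSq (c*ζ+d) := Complex.normSq_pos.mpr hK
  have hnsqD : 0 < normSq (-(conj b)*η + conj d) := Complex.normSq_pos.mpr hD
  have hNM : normSq (c*ζ+d) * normSq (-(conj b)*η + conj d) = A^2 := by
    have h := congrArg normSq hKD
    rw [Complex.normSq_mul] at h
    rw [h, Complex.normSq_ofReal]
    ring
  refine ⟨normSq (c*ζ+d) / A, div_pos hnsqK hΔ0, ?_, ?_, ?_⟩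
  · -- scalar equality
    rw [div_eq_iff hD]
    have hcK : conj c * conj ζ + conj d = conj (c*ζ+d) := by rw [map_add, map_mul]
    rw [hcK]
    apply mul_left_cancel₀ hK
    have hrhs : (c*ζ+d) * (((normSq (c*ζ+d) / A : ℝ):ℂ) * (-(conj b)*η + conj d))
        = ((normSq (c*ζ+d) : ℝ):ℂ) := by
      rw [mul_left_comm, hKD]
      push_cast
      exact div_mul_cancel₀ _ (by exact_mod_cast hΔ0.ne')
    rw [hrhs, Complex.mul_conj]
  · -- |σ'(η)|
    have hσfun : σ = fun z => (conj a * z - conj c)/(-(conj b)*z + conj d) := funext hσ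
    have h1 : HasDerivAt (fun z : ℂ => conj a * z - conj c) (conj a) η := by
      simpa using ((hasDerivAt_id η).const_mul (conj a)).sub_const (conj c)
    have h2 : HasDerivAt (fun z : ℂ => -(conj b)*z + conj d) (-(conj b)) η := by
      simpa using ((hasDerivAt_id η).const_mul (-(conj b))).add_const (conj d)
    have h3 := (h1.div h2 hD).deriv
    simp only [Pi.div_def] at h3
    rw [hσfun, h3]
    have hnum : conj a * (-(conj b)*η + conj d) - (conj a * η - conj c) * (-(conj b))
        = conj (a*d - b*c) := by
      rw [map_sub, map_mul, map_mul]; ring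
    rw [hnum, norm_div, norm_pow, Complex.norm_conj, Complex.sq_norm, ← hAdef]
    rw [div_eq_div_iff hΔ0.ne' hnsqD.ne']
    nlinarith [hNM]
  · -- |φ'(ζ)|⁻¹
    have hφfun : φ = fun z => (a*z+b)/(c*z+d) := funext hφ
    have h1 : HasDerivAt (fun z : ℂ => a*z+b) a ζ := by
      simpa using ((hasDerivAt_id ζ).const_mul a).add_const b
    have h2 : HasDerivAt (fun z : ℂ => c*z+d) c ζ := by
      simpa using ((hasDerivAt_id ζ).const_mul c).add_const d
    have h3 := (h1.div h2 hK).deriv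
    simp only [Pi.div_def] at h3
    rw [hφfun, h3]
    have hnum : a * (c*ζ+d) - (a*ζ+b) * c = a*d - b*c := by ring
    rw [hnum, norm_div, norm_pow, Complex.sq_norm, ← hAdef, inv_div]
end
end
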